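/- Let {t_n}_{n=0}^∞ be a Stieltjes moment sequence and let ϑ be a positive real number; set t_{-1} = ϑ. Then the following are equivalent: (i) {t_{n-1}}_{n=0}^∞ is a Stieltjes moment sequence; (ii) {t_{n-1}}_{n=0}^∞ is positive definite; (iii) there exists a representing measure μ of {t_n}_{n=0}^∞ such that ∫_{[0,∞)} (1/s) dμ(s) ≤ ϑ (with the convention 1/0 = ∞, so that this inequality forces μ({0}) = 0). -/

import Mathlib

open MeasureTheory ENNReal
open scoped NNReal
noncomputable section

/-- `μ` is a representing measure of the sequence `t`. -/
def IsRepMeasure (μ : Measure ℝ≥0) (t : ℕ → ℝ) : Prop :=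
  ∀ n : ℕ, Integrable (fun s : ℝ≥0 => (s : ℝ) ^ n) μ ∧ t n = ∫ s, (s : ℝ) ^ n ∂μ

/-- `t` is a Stieltjes moment sequence. -/
def IsStieltjesMoment (t : ℕ → ℝ) : Prop := ∃ μ : Measure ℝ≥0, IsRepMeasure μ t

/-- `t` is a determinate Stieltjes moment sequence. -/
def IsDetStieltjesMoment (t : ℕ → ℝ) : Prop := ∃! μ : Measure ℝ≥0, IsRepMeasure μ t

section Operators

universe u
variable {H : Type u} [NormedAddCommGroup H] [InnerProductSpace ℂ H]

/-- The maximal domain of the composition `S ∘ T`. -/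
def compDomain (S T : H →ₗ.[ℂ] H) : Submodule ℂ H where
  carrier := {x | ∃ hx : x ∈ T.domain, T ⟨x, hx⟩ ∈ S.domain}
  zero_mem' := ⟨T.domain.zero_mem, by
    have h0 : (⟨0, T.domain.zero_mem⟩ : T.domain) = 0 := rfl
    rw [h0, LinearPMap.map_zero]; exact S.domain.zero_mem⟩
  add_mem' := by
    rintro x y ⟨hx, hx'⟩ ⟨hy, hy'⟩
    refine ⟨T.domain.add_mem hx hy, ?_⟩
    have : (⟨x + y, T.domain.add_mem hx hy⟩ : T.domain) = ⟨x, hx⟩ + ⟨y, hy⟩ := rfl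
    rw [this, LinearPMap.map_add]
    exact S.domain.add_mem hx' hy'
  smul_mem' := by
    rintro c x ⟨hx, hx'⟩
    refine ⟨T.domain.smul_mem c hx, ?_⟩
    have : (⟨c • x, T.domain.smul_mem c hx⟩ : T.domain) = c • (⟨x, hx⟩ : T.domain) := rfl
    rw [this, LinearPMap.map_smul]
    exact S.domain.smul_mem c hx'

/-- Composition `S ∘ T` of partial operators, on the maximal domain. -/
def pmapComp (S T : H →ₗ.[ℂ] H) : H →ₗ.[ℂ] H :=
  S.comp (T.domRestrict (compDomain S T)) (by
    rintro ⟨x, hx⟩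
    have hxT : x ∈ T.domain := (Submodule.mem_inf.mp hx).2
    have hxD : x ∈ compDomain S T := (Submodule.mem_inf.mp hx).1
    refine (congrArg (fun z => z ∈ S.domain) (LinearPMap.domRestrict_apply
      (show ((⟨x, hx⟩ : ↥(compDomain S T ⊓ T.domain)) : H)
      = ((⟨x, hxT⟩ : T.domain) : H) from rfl))).mpr ?_
    exact hxD.choose_spec)

/-- Powers of a partial operator: `pmapPow S n = Sⁿ` with its natural domain. -/
def pmapPow (S : H →ₗ.[ℂ] H) : ℕ → (H →ₗ.[ℂ] H)
  | 0 => LinearMap.id.toPMap ⊤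
  | n + 1 => pmapComp (pmapPow S n) S

open Classical in
/-- Total (junk-valued) application of the power `Sⁿ`. -/
def powApp (S : H →ₗ.[ℂ] H) (n : ℕ) (x : H) : H :=
  if h : x ∈ (pmapPow S n).domain then (pmapPow S n) ⟨x, h⟩ else 0

/-- The set of `C^∞`-vectors of `S`. -/
def Dinf (S : H →ₗ.[ℂ] H) : Set H := {x | ∀ n : ℕ, x ∈ (pmapPow S n).domain}

/-- `F` is a core of `S`. -/
def IsCore (S : H →ₗ.[ℂ] H) (F : Submodule ℂ H) : Prop :=
  F ≤ S.domain ∧ (S.graph : Set (H × H)) ⊆ closure ((S.domRestrict F).graph : Set (H × H))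

end Operators
section Operators
universe u
variable {H : Type u} [NormedAddCommGroup H] [InnerProductSpace ℂ H]

/-- A normal (unbounded) operator: closed, densely defined, with `D(N*) = D(N)` and
`‖N* x‖ = ‖N x‖` on the common domain. -/
def IsNormalOp [CompleteSpace H] (N : H →ₗ.[ℂ] H) : Prop :=
  Dense (N.domain : Set H) ∧ N.IsClosed ∧ N.adjoint.domain = N.domain ∧
    ∀ (x : H) (hx : x ∈ N.domain) (hx' : x ∈ N.adjoint.domain),
      ‖N.adjoint ⟨x, hx'⟩‖ = ‖N ⟨x, hx⟩‖

/-- A subnormal operator: densely defined with a normal extension in a possibly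
larger Hilbert space. -/
def IsSubnormal {H : Type u} [NormedAddCommGroup H] [InnerProductSpace ℂ H]
    (S : H →ₗ.[ℂ] H) : Prop :=
  Dense (S.domain : Set H) ∧
  ∃ (K : Type u) (_ : NormedAddCommGroup K) (_ : InnerProductSpace ℂ K) (_ : CompleteSpace K)
    (J : H →ₗᵢ[ℂ] K) (N : K →ₗ.[ℂ] K), IsNormalOp N ∧
      ∀ x : S.domain, ∃ hx : J x ∈ N.domain, N ⟨J x, hx⟩ = J (S x)

/-- A hyponormal operator. -/
def IsHyponormal [CompleteSpace H] (S : H →ₗ.[ℂ] H) : Prop :=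
  Dense (S.domain : Set H) ∧
  ∀ (x : H) (hx : x ∈ S.domain), ∃ hx' : x ∈ S.adjoint.domain,
      ‖S.adjoint ⟨x, hx'⟩‖ ≤ ‖S ⟨x, hx⟩‖

end Operators

/-- A directed tree on the vertex set `V`: a connected directed graph without circuits
in which every non-root vertex has a unique parent. -/
structure DirectedTree (V : Type*) where
  edge : V → V → Prop
  connected : ∀ u v : V, Relation.ReflTransGen (fun a b => edge a b ∨ edge b a) u v
  no_circuits : ∀ v : V, ¬ Relation.TransGen edge v v
  parent_unique : ∀ u v w : V, edge v u → edge w u → v = w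

namespace DirectedTree

variable {V : Type*}

/-- The roots: vertices with no incoming edge. -/
def isRoot (T : DirectedTree V) (v : V) : Prop := ¬ ∃ u : V, T.edge u v

/-- `V°`: the non-root vertices, i.e. vertices having a parent. -/
def nonRoot (T : DirectedTree V) (v : V) : Prop := ∃ u : V, T.edge u v

open Classical in
/-- The parent function (with junk value at roots). -/
def par (T : DirectedTree V) (v : V) : V := if h : ∃ u : V, T.edge u v then h.choose else v

/-- The set of children of a vertex. -/
def chi (T : DirectedTree V) (u : V) : Set V := {v | T.edge u v}

/-- Iterated children `Chi^n(u)`. -/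
def chiN (T : DirectedTree V) : ℕ → V → Set V
  | 0, u => {u}
  | n + 1, u => ⋃ w ∈ T.chiN n u, T.chi w

/-- The descendants of `u`. -/
def des (T : DirectedTree V) (u : V) : Set V := ⋃ n : ℕ, T.chiN n u

/-- `T` is leafless: every vertex has a child. -/
def Leafless (T : DirectedTree V) : Prop := ∀ u : V, ∃ v : V, T.edge u v

/-- The product `λ_{u∣v} = ∏_{j=0}^{n-1} λ_{par^j(v)}` of the weights along the path of
length `n` ending at `v` (for `v ∈ Chi^n(u)` this is the usual `λ_{u∣v}`). -/
def pathProd (T : DirectedTree V) (lam : V → ℂ) (n : ℕ) (v : V) : ℂ :=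
  ∏ j ∈ Finset.range n, lam (T.par^[j] v)

open Classical in
/-- The formal weighted-shift transformation `Λ_T` on families of complex numbers. -/
def lamMap (T : DirectedTree V) (lam : V → ℂ) (f : V → ℂ) : V → ℂ :=
  fun v => if T.nonRoot v then lam v * f (T.par v) else 0

variable (T : DirectedTree V)

theorem lamMap_add (lam : V → ℂ) (f g : V → ℂ) :
    T.lamMap lam (f + g) = T.lamMap lam f + T.lamMap lam g := by
  funext v; simp only [lamMap, Pi.add_apply]; split <;> ring

theorem lamMap_smul (lam : V → ℂ) (c : ℂ) (f : V → ℂ) :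
    T.lamMap lam (c • f) = c • T.lamMap lam f := by
  funext v; simp only [lamMap, Pi.smul_apply, smul_eq_mul]; split <;> ring

theorem lamMap_zero (lam : V → ℂ) : T.lamMap lam (0 : V → ℂ) = 0 := by
  funext v; simp [lamMap]

/-- The domain of the weighted shift `S_λ`. -/
def shiftDomain (lam : V → ℂ) : Submodule ℂ (lp (fun _ : V => ℂ) 2) where
  carrier := {f | Memℓp (T.lamMap lam f) 2}
  zero_mem' := by
    rw [Set.mem_setOf_eq, lp.coeFn_zero, lamMap_zero]
    exact zero_memℓp
  add_mem' := by
    intro f g hf hg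
    rw [Set.mem_setOf_eq, lp.coeFn_add, lamMap_add]
    exact hf.add hg
  smul_mem' := by
    intro c f hf
    rw [Set.mem_setOf_eq, lp.coeFn_smul, lamMap_smul]
    exact hf.const_smul c

/-- The weighted shift `S_λ` on the directed tree `T`, as a partial operator in `ℓ²(V)`. -/
def shift (lam : V → ℂ) : lp (fun _ : V => ℂ) 2 →ₗ.[ℂ] lp (fun _ : V => ℂ) 2 where
  domain := T.shiftDomain lam
  toFun :=
    { toFun := fun f => (⟨T.lamMap lam f, f.2⟩ : lp (fun _ : V => ℂ) 2)
      map_add' := by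
        rintro f g
        apply lp.ext
        rw [lp.coeFn_add]
        show T.lamMap lam
            ((((f : lp (fun _ : V => ℂ) 2) : V → ℂ)) + (((g : lp (fun _ : V => ℂ) 2) : V → ℂ)))
          = T.lamMap lam ((f : lp (fun _ : V => ℂ) 2) : V → ℂ)
            + T.lamMap lam ((g : lp (fun _ : V => ℂ) 2) : V → ℂ)
        exact T.lamMap_add lam _ _
      map_smul' := by
        rintro c f
        apply lp.ext
        rw [lp.coeFn_smul]
        show T.lamMap lam (c • (((f : lp (fun _ : V => ℂ) 2) : V → ℂ)))
          = c • T.lamMap lam ((f : lp (fun _ : V => ℂ) 2) : V → ℂ)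
        exact T.lamMap_smul lam c _ }

end DirectedTree

open Classical in
/-- The basis vector `e_u` of `ℓ²(V)`. -/
def eVec {V : Type*} (u : V) : lp (fun _ : V => ℂ) 2 := lp.single 2 u 1

section MoreDefs
universe u
variable {H : Type u} [NormedAddCommGroup H] [InnerProductSpace ℂ H]

/-- The inner product, linear in the FIRST argument (the paper's convention). -/
def innerPaper (x y : H) : ℂ := inner ℂ y x

/-- The moment sequence `n ↦ ‖Sⁿ f‖²` generated by the vector `f`. -/
def momentSeq (S : H →ₗ.[ℂ] H) (f : H) : ℕ → ℝ := fun n => ‖powApp S n f‖ ^ 2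

/-- `f` is a quasi-analytic vector of `S` : `f ∈ D^∞(S)` and
`∑ₙ ‖Sⁿ f‖^{-1/n} = ∞` (with `1/0 = ∞`). -/
def IsQuasiAnalyticVec (S : H →ₗ.[ℂ] H) (f : H) : Prop :=
  (∀ n : ℕ, f ∈ (pmapPow S n).domain) ∧
  ∑' n : ℕ, ((‖powApp S (n + 1) f‖₊ ^ ((1 : ℝ) / (n + 1)) : ℝ≥0) : ℝ≥0∞)⁻¹ = ∞

end MoreDefs

/-- The consistency condition `μ_u(σ) = ∑_{v ∈ Chi(u)} |λ_v|² ∫_σ (1/s) dμ_v(s) + ε_u δ₀(σ)`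
at the vertex `u` (with the convention `1/0 = ∞`). -/
def consistentAt {V : Type*} (T : DirectedTree V) (lam : V → ℂ) (μ : V → MeasureTheory.Measure ℝ≥0)
    (ε : V → ℝ≥0) (u : V) : Prop :=
  ∀ σ : Set ℝ≥0, MeasurableSet σ →
    μ u σ = (∑' v : {v : V // T.edge u v},
        (‖lam (v : V)‖₊ : ℝ≥0∞) ^ 2 * ∫⁻ s in σ, ((s : ℝ≥0∞))⁻¹ ∂(μ (v : V)))
      + (ε u : ℝ≥0∞) * MeasureTheory.Measure.dirac (0 : ℝ≥0) σ

/-- The sequence `{ϑ, t₀, t₁, t₂, …}` obtained by prepending `ϑ` to `t`. -/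
def shiftedSeq (ϑ : ℝ) (t : ℕ → ℝ) : ℕ → ℝ := fun n => match n with
  | 0 => ϑ
  | n + 1 => t n

/-- A positive definite sequence of real numbers. -/
def IsPosDefSeq (t : ℕ → ℝ) : Prop :=
  ∀ (n : ℕ) (α : ℕ → ℂ),
    0 ≤ (∑ k ∈ Finset.range (n + 1), ∑ l ∈ Finset.range (n + 1),
        (t (k + l) : ℂ) * α k * (starRingEnd ℂ) (α l)).re ∧
    (∑ k ∈ Finset.range (n + 1), ∑ l ∈ Finset.range (n + 1),
        (t (k + l) : ℂ) * α k * (starRingEnd ℂ) (α l)).im = 0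

/-!
(i) ⇔ (iii): if `ν` represents `ϑ, t₀, t₁, …`, then `s dν(s)` represents `t`, and
`∫ s⁻¹ · s dν ≤ ν(ℝ₊) = ϑ`. Conversely, `∫ s⁻¹ dμ < ∞` forces `μ {0} = 0`, and then
`s⁻¹ dμ(s) + (ϑ - ∫ s⁻¹ dμ) δ₀` represents the shifted sequence.

(i) ⇒ (ii) is the positivity of `∫ (∑ cₖ sᵏ)² dν`. For (ii) ⇒ (i) we prove Stieltjes' theorem:
`a` is a Stieltjes moment sequence once the Hankel forms of `a` and of `(aₙ₊₁)` are nonnegative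
(for `a = (ϑ, t₀, t₁, …)` the second one is the Hankel form of `t`). Fix `N` and write
`a (i + j) = ⟪bᵢ, bⱼ⟫` with Gram vectors. Compressing the shift `bᵢ ↦ bᵢ₊₁` to
`span {b₀, …, b_N}` gives a positive symmetric operator `A` with `⟪Aᵏ b₀, b₀⟫ = aₖ` for `k ≤ N`,
and the spectral decomposition of `A` turns this into a finitely supported measure with moments
`a₀, …, a_N`. By Markov's inequality these measures form a tight family, so by Prokhorov's
theorem they have a weak cluster point `μ`. Truncating `sᵏ` at height `M` changes the `k`-th
moment by at most `a₂ₖ / M`, so `μ` has all the moments `aₖ`.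
-/

open Finset Filter Topology
open scoped RealInnerProductSpace

def HankelFormNonneg (u : ℕ → ℝ) : Prop :=
  ∀ (n : ℕ) (c : ℕ → ℝ), 0 ≤ ∑ k ∈ range (n + 1), ∑ l ∈ range (n + 1), u (k + l) * c k * c l

theorem isPosDefSeq_iff_hankelFormNonneg {u : ℕ → ℝ} : IsPosDefSeq u ↔ HankelFormNonneg u := by
  constructor
  · intro h n c
    have hreal : (∑ k ∈ range (n + 1), ∑ l ∈ range (n + 1),
        (u (k + l) : ℂ) * (c k : ℂ) * (starRingEnd ℂ) (c l : ℂ))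
        = ((∑ k ∈ range (n + 1), ∑ l ∈ range (n + 1), u (k + l) * c k * c l : ℝ) : ℂ) := by
      push_cast [Complex.conj_ofReal]
      rfl
    simpa [hreal] using (h n fun k => (c k : ℂ)).1
  · intro h n α
    set Q := ∑ k ∈ range (n + 1), ∑ l ∈ range (n + 1), (u (k + l) : ℂ) * α k * (starRingEnd ℂ) (α l)
    have hconj : (starRingEnd ℂ) Q = Q := by
      simp only [Q, map_sum, map_mul, Complex.conj_ofReal, Complex.conj_conj]
      rw [Finset.sum_comm]
      refine Finset.sum_congr rfl fun k _ => Finset.sum_congr rfl fun l _ => ?_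
      rw [Nat.add_comm]
      ring
    have hre : Q.re = (∑ k ∈ range (n + 1), ∑ l ∈ range (n + 1), u (k + l) * (α k).re * (α l).re)
        + ∑ k ∈ range (n + 1), ∑ l ∈ range (n + 1), u (k + l) * (α k).im * (α l).im := by
      simp only [Q, Complex.re_sum, ← Finset.sum_add_distrib]
      refine Finset.sum_congr rfl fun k _ => Finset.sum_congr rfl fun l _ => ?_
      simp only [Complex.mul_re, Complex.mul_im, Complex.ofReal_re, Complex.ofReal_im,
        Complex.conj_re, Complex.conj_im]
      ring
    exact ⟨hre ▸ add_nonneg (h n _) (h n _), Complex.conj_eq_iff_im.1 hconj⟩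

theorem isRepMeasure_iff {μ : Measure ℝ≥0} {t : ℕ → ℝ} :
    IsRepMeasure μ t ↔ ∀ n, 0 ≤ t n ∧ ∫⁻ s, (s : ℝ≥0∞) ^ n ∂μ = ENNReal.ofReal (t n) := by
  refine forall_congr' fun n => ?_
  have hnn : 0 ≤ᵐ[μ] fun s : ℝ≥0 => (s : ℝ) ^ n := Eventually.of_forall fun s => by positivity
  have hm : AEStronglyMeasurable (fun s : ℝ≥0 => (s : ℝ) ^ n) μ := by fun_prop
  have hcoe : ∫⁻ s, ENNReal.ofReal ((s : ℝ) ^ n) ∂μ = ∫⁻ s, (s : ℝ≥0∞) ^ n ∂μ := by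
    simp [ENNReal.ofReal_pow]
  rw [Integrable, hasFiniteIntegral_iff_ofReal hnn, integral_eq_lintegral_of_nonneg_ae hnn hm, hcoe]
  constructor
  · rintro ⟨⟨-, hfin⟩, ht⟩
    rw [ht]
    exact ⟨ENNReal.toReal_nonneg, (ENNReal.ofReal_toReal hfin.ne).symm⟩
  · rintro ⟨hpos, heq⟩
    rw [heq, ENNReal.toReal_ofReal hpos]
    exact ⟨⟨hm, ENNReal.ofReal_lt_top⟩, rfl⟩

theorem IsRepMeasure.hankelFormNonneg {μ : Measure ℝ≥0} {t : ℕ → ℝ} (hμ : IsRepMeasure μ t) :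
    HankelFormNonneg t := by
  intro n c
  have hterm : ∀ k l, t (k + l) * c k * c l = ∫ s, c k * c l * (s : ℝ) ^ (k + l) ∂μ := by
    intro k l
    rw [integral_const_mul, ← (hμ (k + l)).2]
    ring
  have hint : ∀ k l, Integrable (fun s : ℝ≥0 => c k * c l * (s : ℝ) ^ (k + l)) μ :=
    fun k l => (hμ (k + l)).1.const_mul _
  simp_rw [hterm, ← integral_finsetSum _ fun l _ => hint _ l]
  rw [← integral_finsetSum _ fun k _ => integrable_finsetSum _ fun l _ => hint k l]
  refine integral_nonneg fun s => ?_
  have hsq : ∑ k ∈ range (n + 1), ∑ l ∈ range (n + 1), c k * c l * (s : ℝ) ^ (k + l)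
      = (∑ k ∈ range (n + 1), c k * (s : ℝ) ^ k) ^ 2 := by
    rw [sq, Finset.sum_mul_sum]
    refine Finset.sum_congr rfl fun k _ => Finset.sum_congr rfl fun l _ => ?_
    ring
  rw [hsq]
  positivity

@[simp] theorem shiftedSeq_succ (ϑ : ℝ) (t : ℕ → ℝ) (n : ℕ) : shiftedSeq ϑ t (n + 1) = t n := rfl

theorem IsRepMeasure.withDensity_coe_of_shiftedSeq {ϑ : ℝ} {t : ℕ → ℝ} {ν : Measure ℝ≥0}
    (hν : IsRepMeasure ν (shiftedSeq ϑ t)) :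
    IsRepMeasure (ν.withDensity fun s => (s : ℝ≥0∞)) t ∧
      ∫⁻ s, (s : ℝ≥0∞)⁻¹ ∂(ν.withDensity fun s => (s : ℝ≥0∞)) ≤ ENNReal.ofReal ϑ := by
  rw [isRepMeasure_iff] at hν ⊢
  refine ⟨fun n => ?_, ?_⟩
  · rw [lintegral_withDensity_eq_lintegral_mul _ (by fun_prop) (by fun_prop)]
    simpa [pow_succ'] using hν (n + 1)
  · rw [lintegral_withDensity_eq_lintegral_mul _ (by fun_prop) (by fun_prop)]
    calc ∫⁻ s, ((s : ℝ≥0∞) * (s : ℝ≥0∞)⁻¹) ∂ν ≤ ∫⁻ s, (s : ℝ≥0∞) ^ 0 ∂ν :=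
          lintegral_mono fun s => by simp [ENNReal.mul_inv_le_one]
      _ = ENNReal.ofReal ϑ := (hν 0).2

theorem ae_ne_zero_of_lintegral_inv_ne_top {μ : Measure ℝ≥0}
    (h : ∫⁻ s, (s : ℝ≥0∞)⁻¹ ∂μ ≠ ∞) : ∀ᵐ s ∂μ, s ≠ 0 := by
  filter_upwards [ae_lt_top (by fun_prop) h] with s hs
  simpa [pos_iff_ne_zero] using hs

theorem IsRepMeasure.withDensity_inv_add_dirac {ϑ : ℝ} (hϑ : 0 ≤ ϑ) {t : ℕ → ℝ} {μ : Measure ℝ≥0}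
    (hμ : IsRepMeasure μ t) (hinv : ∫⁻ s, (s : ℝ≥0∞)⁻¹ ∂μ ≤ ENNReal.ofReal ϑ) :
    IsRepMeasure (μ.withDensity (fun s => (s : ℝ≥0∞)⁻¹)
      + (ENNReal.ofReal ϑ - ∫⁻ s, (s : ℝ≥0∞)⁻¹ ∂μ) • Measure.dirac 0) (shiftedSeq ϑ t) := by
  have hae := ae_ne_zero_of_lintegral_inv_ne_top (ne_top_of_le_ne_top ENNReal.ofReal_ne_top hinv)
  rw [isRepMeasure_iff] at hμ ⊢
  rintro (_ | n)
  · refine ⟨hϑ, ?_⟩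
    simp only [pow_zero, lintegral_one, Measure.add_apply, Measure.smul_apply,
      withDensity_apply _ MeasurableSet.univ, Measure.restrict_univ, smul_eq_mul,
      Measure.dirac_apply_of_mem (Set.mem_univ _), mul_one]
    exact add_tsub_cancel_of_le hinv
  · refine ⟨(hμ n).1, ?_⟩
    rw [lintegral_add_measure, lintegral_smul_measure, lintegral_dirac,
      lintegral_withDensity_eq_lintegral_mul _ (by fun_prop) (by fun_prop)]
    simp only [ENNReal.coe_zero, zero_pow n.succ_ne_zero, smul_zero, add_zero, shiftedSeq_succ]
    rw [← (hμ n).2]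
    refine lintegral_congr_ae ?_
    filter_upwards [hae] with s hs
    simp only [Pi.mul_apply, pow_succ']
    rw [← mul_assoc, ENNReal.inv_mul_cancel (by simpa using hs) ENNReal.coe_ne_top, one_mul]

open scoped MatrixOrder ComplexOrder in
theorem Matrix.PosSemidef.exists_gram_eq {n 𝕜 : Type*} [Fintype n] [RCLike 𝕜]
    {M : Matrix n n 𝕜} (hM : M.PosSemidef) : ∃ v : n → EuclideanSpace 𝕜 n, Matrix.gram 𝕜 v = M := by
  classical
  obtain ⟨B, rfl⟩ := CStarAlgebra.nonneg_iff_eq_star_mul_self.mp hM.nonneg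
  refine ⟨fun j => WithLp.toLp 2 fun k => B k j, ?_⟩
  ext i j
  simp [Matrix.gram_apply, Matrix.mul_apply, PiLp.inner_apply, mul_comm]

theorem HankelFormNonneg.posSemidef {u : ℕ → ℝ} (hu : HankelFormNonneg u) (n : ℕ) :
    (Matrix.of fun i j : Fin (n + 1) => u (i + j)).PosSemidef := by
  refine Matrix.PosSemidef.of_dotProduct_mulVec_nonneg ?_ fun x => ?_
  · ext i j
    simp [Nat.add_comm]
  · let c : ℕ → ℝ := fun k => if h : k < n + 1 then x ⟨k, h⟩ else 0
    have hx : ∀ i : Fin (n + 1), x i = c i := fun i => by simp only [c, dif_pos i.isLt]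
    refine (hu n c).trans_eq ?_
    rw [← Fin.sum_univ_eq_sum_range (fun k => ∑ l ∈ range (n + 1), u (k + l) * c k * c l)]
    refine Finset.sum_congr rfl fun i _ => ?_
    rw [← Fin.sum_univ_eq_sum_range (fun l => u (i + l) * c i * c l), Matrix.mulVec,
      dotProduct, Finset.mul_sum]
    refine Finset.sum_congr rfl fun j _ => ?_
    simp only [star_trivial, Matrix.of_apply, hx]
    ring

theorem HankelFormNonneg.exists_gram {u : ℕ → ℝ} (hu : HankelFormNonneg u) (n : ℕ) :
    ∃ b : ℕ → EuclideanSpace ℝ (Fin (n + 1)),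
      ∀ i j, i ≤ n → j ≤ n → ⟪b i, b j⟫ = u (i + j) := by
  obtain ⟨v, hv⟩ := (hu.posSemidef n).exists_gram_eq
  refine ⟨fun m => v (Fin.ofNat (n + 1) m), fun i j hi hj => ?_⟩
  have := congrFun (congrFun hv (Fin.ofNat (n + 1) i)) (Fin.ofNat (n + 1) j)
  rwa [Matrix.gram_apply, Matrix.of_apply, Fin.val_ofNat, Fin.val_ofNat,
    Nat.mod_eq_of_lt (Nat.lt_succ_of_le hi), Nat.mod_eq_of_lt (Nat.lt_succ_of_le hj)] at this

section Compression

variable {E : Type*} [NormedAddCommGroup E] [InnerProductSpace ℝ E]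

theorem exists_isSymmetric_compression [FiniteDimensional ℝ E] {V : Type*} [AddCommGroup V]
    [Module ℝ V] (T S : V →ₗ[ℝ] E) (hTS : ∀ c d, ⟪S c, T d⟫ = ⟪T c, S d⟫) :
    ∃ A : E →ₗ[ℝ] E, A.IsSymmetric ∧ (∀ x, ∃ c, ⟪A x, x⟫ = ⟪S c, T c⟫) ∧
      ∀ c, A (T c) = (LinearMap.range T).starProjection (S c) := by
  set U := LinearMap.range T
  obtain ⟨g, hg⟩ := T.rangeRestrict.exists_rightInverse_of_surjective T.range_rangeRestrict
  have hTg : ∀ u : U, T (g u) = u := fun u => congrArg Subtype.val (LinearMap.congr_fun hg u)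
  -- By `hTS`, `U.starProjection ∘ S` factors through `T`: the choice of `g` does not matter.
  have hPS : ∀ c c', T c = T c' → U.starProjection (S c) = U.starProjection (S c') := by
    intro c c' h
    rw [← sub_eq_zero, ← map_sub, ← map_sub, Submodule.starProjection_apply_eq_zero_iff]
    rintro _ ⟨d, rfl⟩
    rw [real_inner_comm, hTS, map_sub, h, sub_self, inner_zero_left]
  let A : E →ₗ[ℝ] E :=
    U.starProjection.toLinearMap ∘ₗ S ∘ₗ g ∘ₗ U.orthogonalProjectionOnto.toLinearMap
  have hA : ∀ x y, ⟪A x, y⟫ =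
      ⟪S (g (U.orthogonalProjectionOnto x)), T (g (U.orthogonalProjectionOnto y))⟫ := by
    intro x y
    simp [A, Submodule.inner_starProjection_left_eq_right, hTg]
  refine ⟨A, fun x y => ?_, fun x => ⟨_, hA x x⟩, fun c => ?_⟩
  · rw [hA, hTS, real_inner_comm, ← hA, real_inner_comm]
  · refine hPS _ _ ?_
    rw [LinearMap.comp_apply, ContinuousLinearMap.coe_coe, hTg]
    exact congrArg Subtype.val (U.orthogonalProjectionOnto_mem_subspace_eq_self ⟨T c, c, rfl⟩)

def rangeCombination (N : ℕ) (b : ℕ → E) : (ℕ → ℝ) →ₗ[ℝ] E :=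
  ∑ i ∈ range (N + 1), (LinearMap.proj i : (ℕ → ℝ) →ₗ[ℝ] ℝ).smulRight (b i)

theorem rangeCombination_apply (N : ℕ) (b : ℕ → E) (c : ℕ → ℝ) :
    rangeCombination N b c = ∑ i ∈ range (N + 1), c i • b i := by
  simp [rangeCombination]

theorem inner_rangeCombination (N : ℕ) (b b' : ℕ → E) (c d : ℕ → ℝ) :
    ⟪rangeCombination N b c, rangeCombination N b' d⟫
      = ∑ i ∈ range (N + 1), ∑ j ∈ range (N + 1), c i * d j * ⟪b i, b' j⟫ := by
  rw [rangeCombination_apply, rangeCombination_apply, sum_inner]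
  refine Finset.sum_congr rfl fun i _ => ?_
  rw [inner_sum]
  refine Finset.sum_congr rfl fun j _ => ?_
  rw [real_inner_smul_left, real_inner_smul_right]
  ring

theorem rangeCombination_single {N k : ℕ} (hk : k ≤ N) (b : ℕ → E) :
    rangeCombination N b (Pi.single k 1) = b k := by
  rw [rangeCombination_apply, Finset.sum_eq_single_of_mem k (mem_range.2 (by omega))]
  · simp
  · intro i _ hik
    simp [hik]

theorem exists_isSymmetric_pow_apply_eq [FiniteDimensional ℝ E] {a : ℕ → ℝ} {N : ℕ} {b : ℕ → E}
    (hb : ∀ i j, i ≤ N + 1 → j ≤ N + 1 → ⟪b i, b j⟫ = a (i + j))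
    (h1 : HankelFormNonneg fun n => a (n + 1)) :
    ∃ A : E →ₗ[ℝ] E, A.IsSymmetric ∧ (∀ x, 0 ≤ ⟪A x, x⟫) ∧ ∀ k ≤ N, (A ^ k) (b 0) = b k := by
  set T := rangeCombination N b
  set S := rangeCombination N fun i => b (i + 1)
  have hST : ∀ c d,
      ⟪S c, T d⟫ = ∑ i ∈ range (N + 1), ∑ j ∈ range (N + 1), a (i + j + 1) * c i * d j := by
    intro c d
    rw [inner_rangeCombination]
    refine Finset.sum_congr rfl fun i hi => Finset.sum_congr rfl fun j hj => ?_
    rw [mem_range] at hi hj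
    rw [hb _ _ (by omega) (by omega), Nat.add_right_comm]
    ring
  have hTS : ∀ c d, ⟪S c, T d⟫ = ⟪T c, S d⟫ := by
    intro c d
    rw [hST, inner_rangeCombination]
    refine Finset.sum_congr rfl fun i hi => Finset.sum_congr rfl fun j hj => ?_
    rw [mem_range] at hi hj
    rw [hb _ _ (by omega) (by omega), ← Nat.add_assoc]
    ring
  obtain ⟨A, hsymm, hpos, hAT⟩ := exists_isSymmetric_compression T S hTS
  refine ⟨A, hsymm, fun x => ?_, fun k hk => ?_⟩
  · obtain ⟨c, hc⟩ := hpos x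
    rw [hc, hST]
    exact h1 N c
  · induction k with
    | zero => simp
    | succ k ih =>
      have hmem : b (k + 1) ∈ LinearMap.range T := ⟨_, rangeCombination_single hk b⟩
      rw [pow_succ', Module.End.mul_apply, ih (by omega),
        ← rangeCombination_single (N := N) (k := k) (by omega) b, hAT,
        rangeCombination_single (N := N) (k := k) (by omega),
        Submodule.starProjection_eq_self_iff.2 hmem]

theorem LinearMap.IsSymmetric.exists_inner_pow_eq_sum [FiniteDimensional ℝ E] {A : E →ₗ[ℝ] E}
    (hA : A.IsSymmetric) (hA0 : ∀ x, 0 ≤ ⟪A x, x⟫) (ω : E) :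
    ∃ x w : Fin (Module.finrank ℝ E) → ℝ≥0,
      ∀ k, ⟪(A ^ k) ω, ω⟫ = ∑ i, (w i : ℝ) * (x i : ℝ) ^ k := by
  set f := hA.eigenvectorBasis rfl
  set eig := hA.eigenvalues rfl
  have hf : ∀ k i, (A ^ k) (f i) = eig i ^ k • f i := fun k i => by
    simpa using (hA.hasEigenvector_eigenvectorBasis rfl i).pow_apply k
  have heig : ∀ i, 0 ≤ eig i := fun i => by
    have h := hA0 (f i)
    rwa [← pow_one A, hf 1 i, pow_one, real_inner_smul_left, real_inner_self_eq_norm_sq,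
      f.orthonormal.1 i, one_pow, mul_one] at h
  refine ⟨fun i => ⟨eig i, heig i⟩, fun i => ⟨⟪f i, ω⟫ ^ 2, sq_nonneg _⟩, fun k => ?_⟩
  rw [← f.sum_inner_mul_inner]
  refine Finset.sum_congr rfl fun i _ => ?_
  rw [hA.pow k, hf, real_inner_smul_right, real_inner_comm]
  change _ = ⟪f i, ω⟫ ^ 2 * eig i ^ k
  ring

end Compression

theorem HankelFormNonneg.exists_measure_moments_eq {a : ℕ → ℝ} (h0 : HankelFormNonneg a)
    (h1 : HankelFormNonneg fun n => a (n + 1)) (N : ℕ) :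
    ∃ ν : Measure ℝ≥0, ∀ k ≤ N, 0 ≤ a k ∧ ∫⁻ s, (s : ℝ≥0∞) ^ k ∂ν = ENNReal.ofReal (a k) := by
  obtain ⟨b, hb⟩ := h0.exists_gram (N + 1)
  obtain ⟨A, hA, hA0, hAb⟩ := exists_isSymmetric_pow_apply_eq hb h1
  obtain ⟨x, w, hxw⟩ := hA.exists_inner_pow_eq_sum hA0 (b 0)
  refine ⟨∑ i, (w i : ℝ≥0∞) • Measure.dirac (x i), fun k hk => ?_⟩
  have hak : a k = ((∑ i, w i * x i ^ k : ℝ≥0) : ℝ) := by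
    push_cast
    rw [← hxw, hAb k hk, hb k 0 (by omega) (by omega), add_zero]
  rw [hak, ENNReal.ofReal_coe_nnreal, lintegral_finsetSum_measure]
  refine ⟨NNReal.coe_nonneg _, ?_⟩
  simp only [lintegral_smul_measure, lintegral_dirac, smul_eq_mul, ENNReal.ofNNReal_finsetSum,
    ENNReal.coe_mul, ENNReal.coe_pow]

section WeakLimit

open BoundedContinuousFunction

def truncPow (k : ℕ) (M : ℝ≥0) : ℝ≥0 →ᵇ ℝ≥0 :=
  BoundedContinuousFunction.mkOfBound ⟨fun s => min (s ^ k) M, by fun_prop⟩ M fun x y => by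
    have hx := min_le_right (x ^ k) M
    have hy := min_le_right (y ^ k) M
    rw [NNReal.dist_eq, abs_le]
    constructor <;> simp only [ContinuousMap.coe_mk] <;>
      linarith [NNReal.coe_le_coe.2 hx, NNReal.coe_le_coe.2 hy, (min (x ^ k) M).2,
        (min (y ^ k) M).2]

theorem coe_truncPow_apply (k : ℕ) (M s : ℝ≥0) :
    (truncPow k M s : ℝ≥0∞) = min ((s : ℝ≥0∞) ^ k) M := by
  simp [truncPow, ENNReal.coe_min]

theorem ENNReal.le_min_add_sq_mul_inv (x : ℝ≥0∞) (M : ℝ≥0) :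
    x ≤ min x M + x ^ 2 * (M : ℝ≥0∞)⁻¹ := by
  rcases le_total x M with h | h
  · rw [min_eq_left h]
    exact le_self_add
  · rcases eq_or_ne x 0 with rfl | hx
    · simp
    rw [sq, mul_assoc]
    refine le_add_left (le_mul_of_one_le_right' ?_)
    rwa [← div_eq_mul_inv, ENNReal.le_div_iff_mul_le (Or.inr hx) (Or.inl ENNReal.coe_ne_top),
      one_mul]

theorem lintegral_truncPow_le (ν : Measure ℝ≥0) (k : ℕ) (M : ℝ≥0) :
    ∫⁻ s, (truncPow k M s : ℝ≥0∞) ∂ν ≤ ∫⁻ s, (s : ℝ≥0∞) ^ k ∂ν :=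
  lintegral_mono fun s => by
    rw [coe_truncPow_apply]
    exact min_le_left _ _

theorem lintegral_pow_le_lintegral_truncPow_add (ν : Measure ℝ≥0) (k : ℕ) (M : ℝ≥0) :
    ∫⁻ s, (s : ℝ≥0∞) ^ k ∂ν ≤
      ∫⁻ s, (truncPow k M s : ℝ≥0∞) ∂ν + (∫⁻ s, (s : ℝ≥0∞) ^ (2 * k) ∂ν) * (M : ℝ≥0∞)⁻¹ := by
  rw [← lintegral_mul_const _ (by fun_prop), ← lintegral_add_left (by fun_prop)]
  refine lintegral_mono fun s => ?_
  rw [coe_truncPow_apply, pow_mul']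
  exact ENNReal.le_min_add_sq_mul_inv _ M

theorem lintegral_pow_eq_iSup_lintegral_truncPow (ν : Measure ℝ≥0) (k : ℕ) :
    ∫⁻ s, (s : ℝ≥0∞) ^ k ∂ν = ⨆ n : ℕ, ∫⁻ s, (truncPow k n s : ℝ≥0∞) ∂ν := by
  rw [← lintegral_iSup (fun n => by fun_prop) fun m n hmn s => ?_]
  · refine lintegral_congr fun s => ?_
    have h := inf_iSup_eq ((s : ℝ≥0∞) ^ k) fun n : ℕ => (n : ℝ≥0∞)
    rw [ENNReal.iSup_natCast, inf_top_eq] at h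
    simpa only [coe_truncPow_apply, ENNReal.coe_natCast] using h
  · simp only [coe_truncPow_apply, ENNReal.coe_natCast]
    exact min_le_min_left _ (by exact_mod_cast hmn)

theorem lintegral_pow_eq_of_mapClusterPt {ι : Type*} {l : Filter ι} {νs : ι → FiniteMeasure ℝ≥0}
    {μ : FiniteMeasure ℝ≥0} (hμ : MapClusterPt μ l νs) {k : ℕ} {A B : ℝ≥0∞} (hB : B ≠ ∞)
    (hk : ∀ᶠ i in l, ∫⁻ s, (s : ℝ≥0∞) ^ k ∂(νs i : Measure ℝ≥0) = A)
    (h2k : ∀ᶠ i in l, ∫⁻ s, (s : ℝ≥0∞) ^ (2 * k) ∂(νs i : Measure ℝ≥0) ≤ B) :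
    ∫⁻ s, (s : ℝ≥0∞) ^ k ∂(μ : Measure ℝ≥0) = A := by
  have hbounds : ∀ M : ℝ≥0, ∫⁻ s, (truncPow k M s : ℝ≥0∞) ∂(μ : Measure ℝ≥0) ≤ A ∧
      A ≤ ∫⁻ s, (truncPow k M s : ℝ≥0∞) ∂(μ : Measure ℝ≥0) + B * (M : ℝ≥0∞)⁻¹ := by
    intro M
    -- Both bounds hold along `νs` and are closed conditions on the measure.
    have hcont := FiniteMeasure.continuous_lintegral_boundedContinuousFunction (truncPow k M)
    refine ((isClosed_le hcont continuous_const).inter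
      (isClosed_le continuous_const (hcont.add continuous_const))).mem_of_mapClusterPt hμ ?_
    filter_upwards [hk, h2k] with i hki h2ki
    refine ⟨hki ▸ lintegral_truncPow_le _ k M, ?_⟩
    calc A = ∫⁻ s, (s : ℝ≥0∞) ^ k ∂(νs i : Measure ℝ≥0) := hki.symm
      _ ≤ _ := lintegral_pow_le_lintegral_truncPow_add _ k M
      _ ≤ ∫⁻ s, (truncPow k M s : ℝ≥0∞) ∂(νs i : Measure ℝ≥0) + B * (M : ℝ≥0∞)⁻¹ := by gcongr
  refine le_antisymm ?_ ?_
  · rw [lintegral_pow_eq_iSup_lintegral_truncPow]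
    exact iSup_le fun n => (hbounds n).1
  · set X := ∫⁻ s, (s : ℝ≥0∞) ^ k ∂(μ : Measure ℝ≥0)
    have htend : Tendsto (fun n : ℕ => X + B * (n : ℝ≥0∞)⁻¹) atTop (𝓝 (X + B * 0)) :=
      tendsto_const_nhds.add
        (ENNReal.Tendsto.const_mul ENNReal.tendsto_inv_nat_nhds_zero (Or.inr hB))
    rw [mul_zero, add_zero] at htend
    refine ge_of_tendsto' htend fun n => (hbounds n).2.trans ?_
    gcongr ?_ + _
    exact lintegral_truncPow_le _ k n

theorem measure_Ioi_le_lintegral_div (ν : Measure ℝ≥0) {r : ℝ≥0} (hr : r ≠ 0) :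
    ν (Set.Ioi r) ≤ (∫⁻ s, (s : ℝ≥0∞) ∂ν) / r :=
  (measure_mono fun _ hs => ENNReal.coe_le_coe.2 (le_of_lt hs)).trans
    (meas_ge_le_lintegral_div (by fun_prop) (by simpa using hr) ENNReal.coe_ne_top)

theorem FiniteMeasure.exists_mapClusterPt_of_lintegral_le {ι : Type*} {l : Filter ι} [l.NeBot]
    {νs : ι → FiniteMeasure ℝ≥0} {C D : ℝ≥0} (hmass : ∀ i, (νs i).mass ≤ C)
    (hmom : ∀ i, ∫⁻ s, (s : ℝ≥0∞) ∂(νs i : Measure ℝ≥0) ≤ D) : ∃ μ, MapClusterPt μ l νs := by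
  set K : ℕ → Set ℝ≥0 := fun n => Set.Iic ((n : ℝ≥0) + 1)
  set u : ℕ → ℝ≥0 := fun n => D / ((n : ℝ≥0) + 1)
  have hu : Tendsto u atTop (𝓝 0) := by
    simpa [u, Function.comp_def] using
      (tendsto_const_div_atTop_nhds_zero_nat D).comp (tendsto_add_atTop_nat 1)
  have hK : ∀ n, IsCompact (K n) := fun n => by
    simp only [K, ← Set.Icc_bot]
    exact isCompact_Icc
  have htail : ∀ i n, νs i (K n)ᶜ ≤ u n := by
    intro i n
    rw [← ENNReal.coe_le_coe, FiniteMeasure.ennreal_coeFn_eq_coeFn_toMeasure, Set.compl_Iic,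
      ENNReal.coe_div (by positivity)]
    refine (measure_Ioi_le_lintegral_div _ (by positivity)).trans ?_
    gcongr
    exact hmom i
  obtain ⟨μ, -, hμ⟩ := (isCompact_setOfPred_finiteMeasure_mass_le_compl_isCompact_le C hu hK
    (Or.inl inferInstance)).exists_mapClusterPt (f := l)
    (tendsto_principal.2 (Eventually.of_forall fun i => ⟨hmass i, htail i⟩))
  exact ⟨μ, hμ⟩

theorem isStieltjesMoment_of_forall_exists_moments_eq {a : ℕ → ℝ}
    (h : ∀ N, ∃ ν : Measure ℝ≥0,
      ∀ k ≤ N, 0 ≤ a k ∧ ∫⁻ s, (s : ℝ≥0∞) ^ k ∂ν = ENNReal.ofReal (a k)) :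
    IsStieltjesMoment a := by
  choose ν hν using h
  have hmass : ∀ N, ν N Set.univ = ENNReal.ofReal (a 0) := fun N => by
    simpa using (hν N 0 N.zero_le).2
  have hfin : ∀ N, IsFiniteMeasure (ν N) := fun N => ⟨by simp [hmass]⟩
  let νs : ℕ → FiniteMeasure ℝ≥0 := fun N => ⟨ν (N + 1), hfin _⟩
  obtain ⟨μ, hμ⟩ := FiniteMeasure.exists_mapClusterPt_of_lintegral_le (l := atTop) (νs := νs)
    (C := (a 0).toNNReal) (D := (a 1).toNNReal)
    (fun N => by
      rw [← ENNReal.coe_le_coe, FiniteMeasure.ennreal_mass]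
      exact (hmass (N + 1)).le)
    (fun N => by
      have h1 := (hν (N + 1) 1 (by omega)).2
      simp only [pow_one] at h1
      exact h1.le)
  refine ⟨μ, isRepMeasure_iff.2 fun k => ⟨(hν k k le_rfl).1, ?_⟩⟩
  refine lintegral_pow_eq_of_mapClusterPt hμ (B := ENNReal.ofReal (a (2 * k)))
    ENNReal.ofReal_ne_top ?_ ?_
  · filter_upwards [eventually_ge_atTop k] with N hN
    exact (hν (N + 1) k (by omega)).2
  · filter_upwards [eventually_ge_atTop (2 * k)] with N hN
    exact (hν (N + 1) (2 * k) (by omega)).2.le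

end WeakLimit

theorem isStieltjesMoment_of_hankelFormNonneg {a : ℕ → ℝ} (h0 : HankelFormNonneg a)
    (h1 : HankelFormNonneg fun n => a (n + 1)) : IsStieltjesMoment a :=
  isStieltjesMoment_of_forall_exists_moments_eq (h0.exists_measure_moments_eq h1)

/-- backward extendibility of a Stieltjes moment sequence:
equivalence of (i) Stieltjes, (ii) positive definiteness, (iii) existence of a
representing measure `μ` of `t` with `∫ (1/s) dμ ≤ ϑ` (convention `1/0 = ∞`). -/
theorem stmt0 (t : ℕ → ℝ) (ht : IsStieltjesMoment t) (ϑ : ℝ) (hϑ : 0 < ϑ) :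
    List.TFAE [IsStieltjesMoment (shiftedSeq ϑ t),
      IsPosDefSeq (shiftedSeq ϑ t),
      ∃ μ : Measure ℝ≥0, IsRepMeasure μ t ∧ (∫⁻ s, ((s : ℝ≥0∞))⁻¹ ∂μ) ≤ ENNReal.ofReal ϑ] := by
  obtain ⟨μ, hμ⟩ := ht
  tfae_have 1 → 2 := fun ⟨ν, hν⟩ => isPosDefSeq_iff_hankelFormNonneg.2 hν.hankelFormNonneg
  tfae_have 2 → 1 := fun h => isStieltjesMoment_of_hankelFormNonneg
    (isPosDefSeq_iff_hankelFormNonneg.1 h) hμ.hankelFormNonneg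
  tfae_have 1 → 3 := fun ⟨ν, hν⟩ => ⟨_, hν.withDensity_coe_of_shiftedSeq⟩
  tfae_have 3 → 1 := fun ⟨μ, hμ, hinv⟩ => ⟨_, hμ.withDensity_inv_add_dirac hϑ.le hinv⟩
  tfae_finish
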